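/- In an n-restricted combinatorial horoball, if v₁ and v₂ are vertices and k is the least level such that v₁ or v₂ lies in level k, then every vertex (w,m) on any geodesic between v₁ and v₂ satisfies m ≥ k, i.e., the image of any geodesic between v₁ and v₂ is contained in the union of levels k, k+1, …, n. -/

import Mathlib

/-- The combinatorial horoball based on a graph `Λ`: vertices are `Λ⁰ × ℕ`,
vertical edges join `(v,n)` to `(v,n+1)`, horizontal edges join `(v,n)` to `(w,n)`
whenever `0 < d_Λ(v,w) ≤ 2^n`. -/
def horoball {V : Type*} (Λ : SimpleGraph V) : SimpleGraph (V × ℕ) where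
  Adj a b := (a.1 = b.1 ∧ (a.2 + 1 = b.2 ∨ b.2 + 1 = a.2)) ∨
    (a.2 = b.2 ∧ a.1 ≠ b.1 ∧ Λ.dist a.1 b.1 ≤ 2 ^ a.2)
  symm := by
    refine ⟨?_⟩
    rintro ⟨x, m⟩ ⟨y, k⟩ (⟨h1, h2⟩ | ⟨h1, h2, h3⟩)
    · exact Or.inl ⟨h1.symm, h2.symm⟩
    · exact Or.inr ⟨h1.symm, h2.symm, by rwa [SimpleGraph.dist_comm, ← h1]⟩
  loopless := by
    refine ⟨?_⟩
    rintro ⟨x, m⟩ (⟨_, h⟩ | ⟨_, h, _⟩) <;> simp_all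

/-- The level-`n` subgraph of the combinatorial horoball on `Λ`, identified with a graph
on the vertices of `Λ`: it is the Rips graph `Rips_{2^n}(Λ)`, whose edges join distinct
vertices at `Λ`-distance at most `2^n`. -/
def ripsLevel {V : Type*} (Λ : SimpleGraph V) (n : ℕ) : SimpleGraph V where
  Adj v w := v ≠ w ∧ Λ.dist v w ≤ 2 ^ n
  symm := ⟨fun v w h => ⟨h.1.symm, by rw [SimpleGraph.dist_comm]; exact h.2⟩⟩
  loopless := ⟨fun v h => h.1 rfl⟩

/-- The `n`-restricted horoball `H_n(Λ)`: the full subgraph of the combinatorial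
horoball on the levels `0` through `n`. -/
def restrictedHoroball {V : Type*} (Λ : SimpleGraph V) (n : ℕ) :
    SimpleGraph {p : V × ℕ // p ∈ {q : V × ℕ | q.2 ≤ n}} :=
  SimpleGraph.induce {q : V × ℕ | q.2 ≤ n} (horoball Λ)

lemma rAdj_iff {V : Type*} {Λ : SimpleGraph V} {n : ℕ}
    {a b : {q : V × ℕ // q ∈ {q : V × ℕ | q.2 ≤ n}}} :
    (restrictedHoroball Λ n).Adj a b ↔ (horoball Λ).Adj a.1 b.1 := Iff.rfl

lemma horo_key {V : Type*} (Λ : SimpleGraph V) (n : ℕ) :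
    ∀ N : ℕ,
      (∀ (a b : {q : V × ℕ // q ∈ {q : V × ℕ | q.2 ≤ n}})
        (w : (restrictedHoroball Λ n).Walk a b), w.length ≤ N →
        ∃ w' : (restrictedHoroball Λ n).Walk a b,
          w'.length ≤ w.length ∧
          (∀ i, min (a : V × ℕ).2 (b : V × ℕ).2 ≤ ((w'.getVert i : V × ℕ)).2) ∧
          ((∃ i, ((w.getVert i : V × ℕ)).2 < min (a : V × ℕ).2 (b : V × ℕ).2) →
            w'.length < w.length))
      ∧
      (∀ (x : V) (l : ℕ) (h : l + 1 ≤ n)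
        (b : {q : V × ℕ // q ∈ {q : V × ℕ | q.2 ≤ n}}), l + 1 ≤ (b : V × ℕ).2 →
        ∀ (u : (restrictedHoroball Λ n).Walk ⟨(x, l), Nat.le_of_succ_le h⟩ b),
          u.length ≤ N → (∀ i, l ≤ ((u.getVert i : V × ℕ)).2) →
          ∃ u' : (restrictedHoroball Λ n).Walk ⟨(x, l+1), h⟩ b,
            u'.length ≤ u.length ∧ ∀ i, l + 1 ≤ ((u'.getVert i : V × ℕ)).2) := by
  intro N
  induction N using Nat.strong_induction_on with
  | _ N IH =>
  constructor
  · -- part Q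
    intro a b w hw
    cases w with
    | nil =>
      refine ⟨.nil, le_refl _, fun i => min_le_left _ _, ?_⟩
      rintro ⟨i, hi⟩
      have h0 : (a : V × ℕ).2 < min (a : V × ℕ).2 (a : V × ℕ).2 := hi
      omega
    | @cons _ c _ hadj w₁ =>
      obtain ⟨⟨xa, la⟩, ha⟩ := a
      obtain ⟨⟨xb, lb⟩, hb⟩ := b
      obtain ⟨⟨y, m⟩, hc⟩ := c
      have hlen : w₁.length < N := by
        have : w₁.length + 1 ≤ N := hw; omega
      rcases (rAdj_iff.mp hadj) with ⟨hxy, hud⟩ | ⟨hmm, hne, hdist⟩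
      · simp only at hxy hud
        rcases hud with hup | hdown
        · -- up edge : m = la + 1
          subst hxy
          have hm : m = la + 1 := hup.symm
          subst hm
          obtain ⟨w₁', hle, hlev, hstrict⟩ := (IH w₁.length hlen).1 _ _ w₁ le_rfl
          refine ⟨.cons hadj w₁', Nat.succ_le_succ hle, ?_, ?_⟩
          · intro i
            cases i with
            | zero => show min la lb ≤ la; omega
            | succ j =>
              have h2 : min (la + 1) lb ≤ ((w₁'.getVert j : V × ℕ)).2 := hlev j
              rw [SimpleGraph.Walk.getVert_cons_succ]
              show min la lb ≤ ((w₁'.getVert j : V × ℕ)).2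
              omega
          · rintro ⟨i, hi⟩
            cases i with
            | zero =>
              have h0 : la < min la lb := hi
              omega
            | succ j =>
              rw [SimpleGraph.Walk.getVert_cons_succ] at hi
              have h3 : ((w₁.getVert j : V × ℕ)).2 < min la lb := hi
              have : w₁'.length < w₁.length :=
                hstrict ⟨j, show ((w₁.getVert j : V × ℕ)).2 < min (la + 1) lb by omega⟩
              show w₁'.length + 1 < w₁.length + 1
              omega
        · -- down edge : m + 1 = la
          subst hxy
          subst hdown
          by_cases hblev : lb ≤ m
          · obtain ⟨w₁', hle, hlev, hstrict⟩ := (IH w₁.length hlen).1 _ _ w₁ le_rfl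
            refine ⟨.cons hadj w₁', Nat.succ_le_succ hle, ?_, ?_⟩
            · intro i
              cases i with
              | zero => show min (m + 1) lb ≤ m + 1; omega
              | succ j =>
                have h2 : min m lb ≤ ((w₁'.getVert j : V × ℕ)).2 := hlev j
                rw [SimpleGraph.Walk.getVert_cons_succ]
                show min (m + 1) lb ≤ ((w₁'.getVert j : V × ℕ)).2
                omega
            · rintro ⟨i, hi⟩
              cases i with
              | zero =>
                have h0 : m + 1 < min (m + 1) lb := hi
                omega
              | succ j =>
                rw [SimpleGraph.Walk.getVert_cons_succ] at hi
                have h3 : ((w₁.getVert j : V × ℕ)).2 < min (m + 1) lb := hi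
                have : w₁'.length < w₁.length :=
                  hstrict ⟨j, show ((w₁.getVert j : V × ℕ)).2 < min m lb by omega⟩
                show w₁'.length + 1 < w₁.length + 1
                omega
          · -- lb ≥ m + 1 : lift
            push_neg at hblev
            obtain ⟨w₁', hle, hlev, _⟩ := (IH w₁.length hlen).1 _ _ w₁ le_rfl
            have hm1n : m + 1 ≤ n := ha
            have hlev' : ∀ i, m ≤ ((w₁'.getVert i : V × ℕ)).2 := by
              intro i
              have h2 : min m lb ≤ ((w₁'.getVert i : V × ℕ)).2 := hlev i
              omega
            obtain ⟨u', hule, hulev⟩ :=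
              (IH w₁'.length (lt_of_le_of_lt hle hlen)).2 xa m hm1n
                ⟨(xb, lb), hb⟩ hblev w₁' le_rfl hlev'
            refine ⟨u', ?_, ?_, ?_⟩
            · show u'.length ≤ w₁.length + 1; omega
            · intro i
              have h2 : m + 1 ≤ ((u'.getVert i : V × ℕ)).2 := hulev i
              show min (m + 1) lb ≤ ((u'.getVert i : V × ℕ)).2
              omega
            · intro _
              show u'.length < w₁.length + 1; omega
      · -- horizontal edge : la = m
        simp only at hmm hne hdist
        subst hmm
        obtain ⟨w₁', hle, hlev, hstrict⟩ := (IH w₁.length hlen).1 _ _ w₁ le_rfl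
        refine ⟨.cons hadj w₁', Nat.succ_le_succ hle, ?_, ?_⟩
        · intro i
          cases i with
          | zero => show min la lb ≤ la; omega
          | succ j =>
            rw [SimpleGraph.Walk.getVert_cons_succ]
            exact hlev j
        · rintro ⟨i, hi⟩
          cases i with
          | zero =>
            have h0 : la < min la lb := hi
            omega
          | succ j =>
            rw [SimpleGraph.Walk.getVert_cons_succ] at hi
            have : w₁'.length < w₁.length := hstrict ⟨j, hi⟩
            show w₁'.length + 1 < w₁.length + 1
            omega
  · -- part L
    intro x l h b hblev u hu hlev
    cases u with
    | nil =>
      have h0 : l + 1 ≤ l := hblev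
      omega
    | @cons _ c _ hadj rest =>
      obtain ⟨⟨y, m⟩, hc⟩ := c
      have hlen : rest.length < N := by
        have : rest.length + 1 ≤ N := hu; omega
      rcases (rAdj_iff.mp hadj) with ⟨hxy, hud⟩ | ⟨hmm, hne, hdist⟩
      · simp only at hxy hud
        rcases hud with hup | hdown
        · -- up edge : m = l + 1, y = x
          subst hxy
          have hm : m = l + 1 := hup.symm
          subst hm
          obtain ⟨w', hle, hlev', _⟩ := (IH rest.length hlen).1 _ _ rest le_rfl
          refine ⟨w', ?_, ?_⟩
          · show w'.length ≤ rest.length + 1; omega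
          · intro i
            have h2 : min (l + 1) (b : V × ℕ).2 ≤ ((w'.getVert i : V × ℕ)).2 := hlev' i
            omega
        · -- down edge impossible
          have h2 := hlev 1
          rw [SimpleGraph.Walk.getVert_cons_succ, SimpleGraph.Walk.getVert_zero] at h2
          have h3 : l ≤ m := h2
          omega
      · -- horizontal
        simp only at hmm hne hdist
        subst hmm
        obtain ⟨rest', hle, hlev'⟩ :=
          (IH rest.length hlen).2 y l h b hblev rest le_rfl
            (fun i => by
              have h2 := hlev (i + 1)
              rw [SimpleGraph.Walk.getVert_cons_succ] at h2
              exact h2)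
        have hadj' : (restrictedHoroball Λ n).Adj ⟨(x, l + 1), h⟩ ⟨(y, l + 1), h⟩ := by
          refine rAdj_iff.mpr (Or.inr ⟨rfl, hne, ?_⟩)
          show Λ.dist x y ≤ 2 ^ (l + 1)
          exact hdist.trans (Nat.pow_le_pow_right (by norm_num) (Nat.le_succ _))
        refine ⟨.cons hadj' rest', ?_, ?_⟩
        · show rest'.length + 1 ≤ rest.length + 1; omega
        · intro i
          cases i with
          | zero => exact le_refl _
          | succ j =>
            rw [SimpleGraph.Walk.getVert_cons_succ]
            exact hlev' j

/-- In an `n`-restricted horoball, if `k` is the least of the levels of the two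
endpoints `v₁`, `v₂`, then every vertex on any geodesic between `v₁` and `v₂` lies at
level at least `k`: geodesics never descend below the lower of the two endpoint
levels. -/
theorem restrictedHoroball_geodesic_above_min_level {V : Type*} (Λ : SimpleGraph V)
    (hΛ : Λ.Connected) (n : ℕ) {v₁ v₂ : {q : V × ℕ // q ∈ {q : V × ℕ | q.2 ≤ n}}}
    (w : (restrictedHoroball Λ n).Walk v₁ v₂)
    (hgeo : w.length = (restrictedHoroball Λ n).dist v₁ v₂) :
    ∀ i : ℕ, min (v₁ : V × ℕ).2 (v₂ : V × ℕ).2 ≤ ((w.getVert i : V × ℕ)).2 := by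
  by_contra hcon
  push_neg at hcon
  obtain ⟨i, hi⟩ := hcon
  obtain ⟨w', hle, _, hstrict⟩ := (horo_key Λ n w.length).1 v₁ v₂ w le_rfl
  have h1 : w'.length < w.length := hstrict ⟨i, hi⟩
  have h2 : (restrictedHoroball Λ n).dist v₁ v₂ ≤ w'.length := SimpleGraph.dist_le w'
  omega
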